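/- Let V be a nonnegative random variable, and let a>0, θ∈ℝ, κ≥0. If limsup_{ε→0+} ε^{a}·|log ε|^{-θ}·(-log P(V ≤ ε)) ≤ κ, then there exists a finite constant K (depending only on κ, a, θ) such that limsup_{μ→∞} μ^{-a/(1+a)}·(log μ)^{-θ/(1+a)}·(-log E[exp(-μ·V)]) ≤ K. -/

import Mathlib

/-!
Since `exp (-μ V) ≥ exp (-μ ε)` on `{V ≤ ε}`, we have
`-log E[exp (-μ V)] ≤ μ ε - log P(V ≤ ε) ≤ μ ε + (κ + 1) ε ^ (-a) |log ε| ^ θ`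
for small `ε`.
The cutoff `ε = μ ^ (-1/(1+a)) (log μ) ^ (θ/(1+a))` balances the two terms: then
`|log ε| ~ log μ / (1 + a)`, and both are of order `μ ^ (a/(1+a)) (log μ) ^ (θ/(1+a))`.
-/

open MeasureTheory Filter Topology ENNReal

noncomputable section

/-- minus-log, valued in [0,∞] (equal to ∞ at 0). -/
def negLog (x : ℝ≥0∞) : ℝ≥0∞ :=
  if x = 0 then ⊤ else ENNReal.ofReal (-Real.log x.toReal)

lemma negLog_antitone : Antitone negLog := by
  intro x y hxy
  rcases eq_or_ne x 0 with rfl | hx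
  · simp [negLog]
  rcases eq_or_ne y ⊤ with rfl | hy
  · simp [negLog]
  have hx' : x ≠ ⊤ := ne_top_of_le_ne_top hy hxy
  rw [negLog, if_neg ((pos_of_ne_zero hx).trans_le hxy).ne', negLog, if_neg hx]
  exact ENNReal.ofReal_le_ofReal <| neg_le_neg <|
    Real.log_le_log (ENNReal.toReal_pos hx hx') (ENNReal.toReal_mono hy hxy)

lemma negLog_ofReal_exp_neg_mul_le (t : ℝ) {p : ℝ≥0∞} (hp : p ≠ ⊤) :
    negLog (ENNReal.ofReal (Real.exp (-t)) * p) ≤ ENNReal.ofReal t + negLog p := by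
  rcases eq_or_ne p 0 with rfl | hp0
  · simp [negLog]
  have hexp : ENNReal.ofReal (Real.exp (-t)) ≠ 0 := by simp [Real.exp_pos]
  rw [negLog, if_neg (mul_ne_zero hexp hp0), negLog, if_neg hp0, ENNReal.toReal_mul,
    ENNReal.toReal_ofReal (Real.exp_nonneg _),
    Real.log_mul (Real.exp_ne_zero _) (ENNReal.toReal_pos hp0 hp).ne', Real.log_exp,
    neg_add, neg_neg]
  exact ENNReal.ofReal_add_le

lemma ofReal_exp_neg_mul_measure_le_lintegral {Ω : Type*} [MeasurableSpace Ω] (P : Measure Ω)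
    {V : Ω → ℝ} (hV : Measurable V) {μ : ℝ} (hμ : 0 ≤ μ) (ε : ℝ) :
    ENNReal.ofReal (Real.exp (-(μ * ε))) * P {ω | V ω ≤ ε} ≤
      ∫⁻ ω, ENNReal.ofReal (Real.exp (-(μ * V ω))) ∂P := by
  refine le_trans ?_
    (mul_meas_ge_le_lintegral₀ (by fun_prop) (ENNReal.ofReal (Real.exp (-(μ * ε)))))
  gcongr with ω
  intro hω
  exact ENNReal.ofReal_le_ofReal (Real.exp_le_exp.2 (neg_le_neg (by gcongr)))

lemma negLog_lintegral_exp_neg_mul_le {Ω : Type*} [MeasurableSpace Ω] (P : Measure Ω)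
    [IsFiniteMeasure P] {V : Ω → ℝ} (hV : Measurable V) {μ : ℝ} (hμ : 0 ≤ μ)
    (ε : ℝ) :
    negLog (∫⁻ ω, ENNReal.ofReal (Real.exp (-(μ * V ω))) ∂P) ≤
      ENNReal.ofReal (μ * ε) + negLog (P {ω | V ω ≤ ε}) :=
  (negLog_antitone (ofReal_exp_neg_mul_measure_le_lintegral P hV hμ ε)).trans
    (negLog_ofReal_exp_neg_mul_le _ (measure_ne_top P _))

def deBruijnCutoff (a θ μ : ℝ) : ℝ :=
  μ ^ (-1 / (1 + a)) * Real.log μ ^ (θ / (1 + a))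

section deBruijnCutoff

variable {a : ℝ} (θ : ℝ) {μ : ℝ}

lemma deBruijnCutoff_pos (hμ : 1 < μ) : 0 < deBruijnCutoff a θ μ := by
  have := Real.log_pos hμ
  unfold deBruijnCutoff
  positivity

lemma log_deBruijnCutoff (hμ : 1 < μ) :
    Real.log (deBruijnCutoff a θ μ) =
      (-1 + θ * (Real.log (Real.log μ) / Real.log μ)) / (1 + a) * Real.log μ := by
  have hl := Real.log_pos hμ
  rw [deBruijnCutoff, Real.log_mul (by positivity) (by positivity),
    Real.log_rpow (by positivity), Real.log_rpow hl]
  field_simp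

lemma mul_deBruijnCutoff_eq_one (ha : 1 + a ≠ 0) (hμ : 1 < μ) :
    μ ^ (-(a / (1 + a))) * Real.log μ ^ (-(θ / (1 + a))) *
      (μ * deBruijnCutoff a θ μ) = 1 := by
  have hμ0 : 0 < μ := zero_lt_one.trans hμ
  have hl := Real.log_pos hμ
  calc _ = μ ^ (-(a / (1 + a)) + 1 + -1 / (1 + a)) *
        Real.log μ ^ (-(θ / (1 + a)) + θ / (1 + a)) := by
        rw [Real.rpow_add hμ0, Real.rpow_add hμ0, Real.rpow_add hl, Real.rpow_one,
          deBruijnCutoff]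
        ring
    _ = 1 := by
      have hexp : -(a / (1 + a)) + 1 + -1 / (1 + a) = 0 := by field_simp; ring
      rw [hexp, neg_add_cancel, Real.rpow_zero, Real.rpow_zero, mul_one]

lemma rpow_mul_rpow_eq_deBruijnCutoff (ha : 1 + a ≠ 0) (hμ : 1 < μ)
    (hε : Real.log (deBruijnCutoff a θ μ) ≠ 0) :
    μ ^ (-(a / (1 + a))) * Real.log μ ^ (-(θ / (1 + a))) =
      (|Real.log (deBruijnCutoff a θ μ)| / Real.log μ) ^ θ *
        (deBruijnCutoff a θ μ ^ a * |Real.log (deBruijnCutoff a θ μ)| ^ (-θ)) := by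
  have hμ0 : 0 < μ := zero_lt_one.trans hμ
  have hl := Real.log_pos hμ
  have hx : 0 < |Real.log (deBruijnCutoff a θ μ)| := abs_pos.2 hε
  set x := |Real.log (deBruijnCutoff a θ μ)|
  have hexp : -(θ / (1 + a)) = -θ + θ / (1 + a) * a := by field_simp; ring
  rw [Real.div_rpow hx.le hl.le, Real.rpow_neg hx.le, deBruijnCutoff,
    Real.mul_rpow (by positivity) (by positivity), ← Real.rpow_mul hμ0.le,
    ← Real.rpow_mul hl.le, hexp, Real.rpow_add hl, Real.rpow_neg hl.le]
  field_simp

lemma tendsto_log_deBruijnCutoff_div_log :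
    Tendsto (fun μ => Real.log (deBruijnCutoff a θ μ) / Real.log μ) atTop
      (𝓝 (-1 / (1 + a))) := by
  have hloglog : Tendsto (fun μ : ℝ => Real.log (Real.log μ) / Real.log μ) atTop (𝓝 0) :=
    Real.isLittleO_log_id_atTop.tendsto_div_nhds_zero.comp Real.tendsto_log_atTop
  have := ((hloglog.const_mul θ).const_add (-1)).div_const (1 + a)
  rw [mul_zero, add_zero] at this
  refine this.congr' ?_
  filter_upwards [eventually_gt_atTop 1] with μ hμ
  rw [log_deBruijnCutoff θ hμ, mul_div_cancel_right₀ _ (Real.log_pos hμ).ne']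

lemma tendsto_deBruijnCutoff (ha : 0 < 1 + a) :
    Tendsto (deBruijnCutoff a θ) atTop (𝓝[>] 0) := by
  have hlog : Tendsto (fun μ => Real.log (deBruijnCutoff a θ μ)) atTop atBot := by
    refine ((tendsto_log_deBruijnCutoff_div_log θ).neg_mul_atTop
      (div_neg_of_neg_of_pos (by norm_num) ha) Real.tendsto_log_atTop).congr' ?_
    filter_upwards [eventually_gt_atTop 1] with μ hμ
    exact div_mul_cancel₀ _ (Real.log_pos hμ).ne'
  refine (Real.tendsto_exp_atBot_nhdsGT.comp hlog).congr' ?_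
  filter_upwards [eventually_gt_atTop 1] with μ hμ
  exact Real.exp_log (deBruijnCutoff_pos θ hμ)

lemma eventually_abs_log_deBruijnCutoff_div_log_rpow_lt (ha : 0 < 1 + a) :
    ∀ᶠ μ in atTop, (|Real.log (deBruijnCutoff a θ μ)| / Real.log μ) ^ θ <
      (1 / (1 + a)) ^ θ + 1 := by
  have h := (tendsto_log_deBruijnCutoff_div_log (a := a) θ).abs.rpow_const (p := θ)
    (Or.inl (by positivity))
  rw [abs_div, abs_neg, abs_one, abs_of_pos ha] at h
  filter_upwards [h.eventually (gt_mem_nhds (lt_add_one _)), eventually_gt_atTop 1] with μ hlt hμ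
  rwa [abs_div, abs_of_pos (Real.log_pos hμ)] at hlt

end deBruijnCutoff

/-- (de Bruijn Tauberian direction) Let `V ≥ 0` be a random variable,
`a > 0`, `θ ∈ ℝ`, `κ ≥ 0`. If `limsup_{ε→0+} ε^a |log ε|^(-θ) (-log P(V ≤ ε)) ≤ κ`, then
there is a finite constant `K = K(κ,a,θ)` with
`limsup_{μ→∞} μ^(-a/(1+a)) (log μ)^(-θ/(1+a)) (-log E[exp(-μV)]) ≤ K`. -/
theorem de_bruijn_upper_direction (a θ κ : ℝ) (ha : 0 < a) (hκ : 0 ≤ κ) :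
    ∃ K : ℝ, ∀ (Ω : Type) [MeasurableSpace Ω] (P : Measure Ω) [IsProbabilityMeasure P]
      (V : Ω → ℝ), Measurable V → (∀ ω, 0 ≤ V ω) →
      (Filter.limsup (fun ε : ℝ =>
          ENNReal.ofReal (ε ^ a * |Real.log ε| ^ (-θ)) *
            negLog (P {ω | V ω ≤ ε})) (𝓝[>] (0:ℝ)) ≤ ENNReal.ofReal κ) →
      Filter.limsup (fun μ : ℝ =>
          ENNReal.ofReal (μ ^ (-(a/(1+a))) * Real.log μ ^ (-(θ/(1+a)))) *
            negLog (∫⁻ ω, ENNReal.ofReal (Real.exp (-(μ * V ω))) ∂P)) Filter.atTop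
        ≤ ENNReal.ofReal K := by
  have ha' : 0 < 1 + a := by linarith
  refine ⟨1 + ((1 / (1 + a)) ^ θ + 1) * (κ + 1), fun Ω _ P _ V hV _ hlim => ?_⟩
  have hsmall : ∀ᶠ ε in 𝓝[>] (0:ℝ),
      ENNReal.ofReal (ε ^ a * |Real.log ε| ^ (-θ)) * negLog (P {ω | V ω ≤ ε}) ≤
        ENNReal.ofReal (κ + 1) :=
    (eventually_lt_of_limsup_lt (hlim.trans_lt
      ((ENNReal.ofReal_lt_ofReal_iff (by linarith)).2 (lt_add_one κ)))).mono fun _ => le_of_lt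
  have hcut := tendsto_deBruijnCutoff (a := a) θ ha'
  refine limsup_le_of_le (by isBoundedDefault) ?_
  filter_upwards [eventually_gt_atTop 1, hcut.eventually hsmall,
    hcut.eventually (Ioo_mem_nhdsGT one_pos),
    eventually_abs_log_deBruijnCutoff_div_log_rpow_lt θ ha'] with μ hμ hε hε1 hratio
  have hl : 0 < Real.log μ := Real.log_pos hμ
  have hlogε : Real.log (deBruijnCutoff a θ μ) ≠ 0 := (Real.log_neg hε1.1 hε1.2).ne
  have hweight := rpow_mul_rpow_eq_deBruijnCutoff θ ha'.ne' hμ hlogε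
  set ε := deBruijnCutoff a θ μ
  calc _ ≤ ENNReal.ofReal (μ ^ (-(a / (1 + a))) * Real.log μ ^ (-(θ / (1 + a)))) *
          (ENNReal.ofReal (μ * ε) + negLog (P {ω | V ω ≤ ε})) := by
        gcongr
        exact negLog_lintegral_exp_neg_mul_le P hV (by linarith) ε
    _ = ENNReal.ofReal 1 + ENNReal.ofReal ((|Real.log ε| / Real.log μ) ^ θ) *
          (ENNReal.ofReal (ε ^ a * |Real.log ε| ^ (-θ)) * negLog (P {ω | V ω ≤ ε})) := by
        rw [mul_add, ← ENNReal.ofReal_mul (by positivity),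
          mul_deBruijnCutoff_eq_one θ ha'.ne' hμ, hweight,
          ENNReal.ofReal_mul (by positivity), mul_assoc]
    _ ≤ ENNReal.ofReal 1 + ENNReal.ofReal ((1 / (1 + a)) ^ θ + 1) * ENNReal.ofReal (κ + 1) := by
        gcongr
    _ = _ := by
        rw [← ENNReal.ofReal_mul (by positivity),
          ← ENNReal.ofReal_add zero_le_one (by positivity)]

end
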